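/- Let γ > 0, y > 0, and x with |x| < y/γ. Then exp(γ·arctan(x/(y − γx)))·sqrt(y² + 2γyx + (1+γ²)x²) = exp(−γ·arctan(x/(y + γx)))·sqrt(y² − 2γyx + (1+γ²)x²) if and only if x = 0. -/

import Mathlib

/-! The right-hand side is the left-hand side evaluated at `-x`. For `x > 0` each factor at `x`
beats its value at `-x`: the exponent `γ * arctan (x / (y - γ x))` has the sign of `x`, and the
radicand `(y + γ x)² + x²` exceeds `(y - γ x)² + x²` by `4 γ y x`. So equality forces `x = 0`. -/

open Real

noncomputable def expArctanSqrt (γ y x : ℝ) : ℝ :=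
  exp (γ * arctan (x / (y - γ * x))) * sqrt (y ^ 2 + 2 * γ * y * x + (1 + γ ^ 2) * x ^ 2)

theorem expArctanSqrt_neg (γ y x : ℝ) :
    expArctanSqrt γ y (-x) =
      exp (-(γ * arctan (x / (y + γ * x)))) * sqrt (y ^ 2 - 2 * γ * y * x + (1 + γ ^ 2) * x ^ 2) := by
  rw [expArctanSqrt, neg_div, arctan_neg, mul_neg, mul_neg, sub_neg_eq_add, neg_sq]
  ring_nf

theorem expArctanSqrt_neg_lt {γ y x : ℝ} (hγ : 0 < γ) (hx : 0 < x) (hxy : γ * x < y) :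
    expArctanSqrt γ y (-x) < expArctanSqrt γ y x := by
  have hy : 0 < y := by nlinarith
  rw [expArctanSqrt_neg, expArctanSqrt]
  have hexp : exp (-(γ * arctan (x / (y + γ * x)))) ≤ exp (γ * arctan (x / (y - γ * x))) := by
    have h₁ : 0 < arctan (x / (y + γ * x)) := arctan_pos.mpr (by positivity)
    have h₂ : 0 < arctan (x / (y - γ * x)) := arctan_pos.mpr (div_pos hx (by linarith))
    exact exp_le_exp.mpr (by nlinarith)
  have hsqrt : sqrt (y ^ 2 - 2 * γ * y * x + (1 + γ ^ 2) * x ^ 2) <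
      sqrt (y ^ 2 + 2 * γ * y * x + (1 + γ ^ 2) * x ^ 2) :=
    sqrt_lt_sqrt (by nlinarith [sq_nonneg (y - γ * x)]) (by nlinarith [mul_pos (mul_pos hγ hy) hx])
  exact mul_lt_mul' hexp hsqrt (sqrt_nonneg _) (exp_pos _)

theorem stmt_4_general (γ y x : ℝ) (hγ : 0 < γ) (hx : |x| < y / γ) :
    Real.exp (γ * Real.arctan (x / (y - γ * x))) *
        Real.sqrt (y ^ 2 + 2 * γ * y * x + (1 + γ ^ 2) * x ^ 2) =
      Real.exp (-(γ * Real.arctan (x / (y + γ * x)))) *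
        Real.sqrt (y ^ 2 - 2 * γ * y * x + (1 + γ ^ 2) * x ^ 2) ↔ x = 0 := by
  have hγx : |γ * x| < y := by
    rw [abs_mul, abs_of_pos hγ]
    exact (lt_div_iff₀' hγ).mp hx
  obtain ⟨hlow, hhigh⟩ := abs_lt.mp hγx
  change expArctanSqrt γ y x = _ ↔ _
  rw [← expArctanSqrt_neg]
  refine ⟨fun h => ?_, fun h => by rw [h, neg_zero]⟩
  rcases lt_trichotomy x 0 with hneg | hzero | hpos
  · have hlt := expArctanSqrt_neg_lt hγ (y := y) (neg_pos.mpr hneg) (by linarith)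
    rw [neg_neg] at hlt
    exact absurd h hlt.ne
  · exact hzero
  · exact absurd h (expArctanSqrt_neg_lt hγ hpos hhigh).ne'

theorem stmt_4 (γ y x : ℝ) (hγ : 0 < γ) (hy : 0 < y) (hx : |x| < y / γ) :
    Real.exp (γ * Real.arctan (x / (y - γ * x))) *
        Real.sqrt (y ^ 2 + 2 * γ * y * x + (1 + γ ^ 2) * x ^ 2) =
      Real.exp (-(γ * Real.arctan (x / (y + γ * x)))) *
        Real.sqrt (y ^ 2 - 2 * γ * y * x + (1 + γ ^ 2) * x ^ 2) ↔ x = 0 :=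
  stmt_4_general γ y x hγ hx
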